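/- Let g(x) = φ(x)(φ(x) - x·Φ(-x)) where φ and Φ are the standard normal density and CDF. For any ξ ≥ 0 and any β ∈ [0, π/2), the integral L(β) := ∫_0^∞ φ(x)(Φ(ξ + x·tan β) - Φ(ξ - x·tan β)) dx satisfies L(β) ≥ 2·g(ξ)·sin β·cos β. -/

import Mathlib

/-!
On `x > 0` the increment `Φ(ξ + xt) - Φ(ξ - xt)`, `t = tan β`, is the mass of an interval of
length `2xt` on which `φ ≥ φ(ξ + xt)` (as `ξ ≥ 0`, no point of it is farther from `0` than
`ξ + xt`), so `L(β) ≥ 2t ∫₀^∞ x φ(x) φ(ξ + xt) dx`.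
The latter integral is explicit: rotating `(x, ξ)` by the angle `β` turns `φ(x) φ(ξ + xt)` into
`φ(ξ cos β) φ(x / cos β + ξ sin β)`, and an integration by parts gives
`2t ∫₀^∞ x φ(x) φ(ξ + xt) dx = 2 sin β cos β · φ(ξ cos β) · G(ξ sin β)`, where
`G(u) = φ(u) - u Φ(-u)` is the normal loss function. Finally `φ(ξ cos β) ≥ φ(ξ)`, and `G` is
nonnegative and decreasing, so `G(ξ sin β) ≥ G(ξ)`.
-/

open MeasureTheory Real

noncomputable def stdPhi (x : ℝ) : ℝ := Real.exp (-x ^ 2 / 2) / Real.sqrt (2 * Real.pi)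

noncomputable def stdCdf (x : ℝ) : ℝ := ∫ t in Set.Iic x, stdPhi t

noncomputable def gFun (x : ℝ) : ℝ := stdPhi x * (stdPhi x - x * stdCdf (-x))

open Set Filter Topology

section StdPhi

lemma stdPhi_eq_gaussianPDFReal : stdPhi = ProbabilityTheory.gaussianPDFReal 0 1 := by
  ext x
  simp [ProbabilityTheory.gaussianPDFReal, stdPhi, div_eq_inv_mul]

lemma stdPhi_nonneg (x : ℝ) : 0 ≤ stdPhi x := by
  unfold stdPhi
  positivity

lemma continuous_stdPhi : Continuous stdPhi := by
  unfold stdPhi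
  fun_prop

lemma integrable_stdPhi : Integrable stdPhi := by
  rw [stdPhi_eq_gaussianPDFReal]
  exact ProbabilityTheory.integrable_gaussianPDFReal 0 1

lemma integral_stdPhi : ∫ x, stdPhi x = 1 := by
  rw [stdPhi_eq_gaussianPDFReal]
  exact ProbabilityTheory.integral_gaussianPDFReal_eq_one 0 one_ne_zero

lemma stdPhi_le_stdPhi_of_abs_le {a b : ℝ} (h : |b| ≤ |a|) : stdPhi a ≤ stdPhi b := by
  have := sq_le_sq.2 h
  unfold stdPhi
  gcongr

lemma stdPhi_le_stdPhi_zero (x : ℝ) : stdPhi x ≤ stdPhi 0 :=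
  stdPhi_le_stdPhi_of_abs_le (by simp)

lemma stdPhi_neg (x : ℝ) : stdPhi (-x) = stdPhi x := by
  simp [stdPhi]

lemma hasDerivAt_stdPhi (x : ℝ) : HasDerivAt stdPhi (-x * stdPhi x) x := by
  have hexp : HasDerivAt (fun x : ℝ => -x ^ 2 / 2) (-x) x := by
    exact ((hasDerivAt_pow 2 x).neg.div_const 2).congr_deriv (by ring)
  exact (((Real.hasDerivAt_exp _).comp x hexp).div_const _).congr_deriv
    (by unfold stdPhi; ring)

lemma tendsto_stdPhi_atTop : Tendsto stdPhi atTop (𝓝 0) := by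
  have h : Tendsto (fun x : ℝ => -x ^ 2 / 2) atTop atBot :=
    (tendsto_neg_atTop_atBot.comp (tendsto_pow_atTop two_ne_zero)).atBot_div_const two_pos
  unfold stdPhi
  simpa only [Function.comp_def, zero_div] using
    (Real.tendsto_exp_atBot.comp h).div_const (Real.sqrt (2 * π))

lemma integrable_mul_stdPhi : Integrable fun x => x * stdPhi x := by
  have h := (integrable_mul_exp_neg_mul_sq (b := 1 / 2) (by norm_num)).div_const
    (Real.sqrt (2 * π))
  refine h.congr (Eventually.of_forall fun x => ?_)
  simp only [stdPhi]
  ring_nf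

lemma integral_Ioi_mul_stdPhi (a : ℝ) : ∫ x in Ioi a, x * stdPhi x = stdPhi a := by
  have hderiv : ∀ x ∈ Ici a, HasDerivAt (fun y => -stdPhi y) (x * stdPhi x) x :=
    fun x _ => (hasDerivAt_stdPhi x).neg.congr_deriv (by ring)
  exact (integral_Ioi_of_hasDerivAt_of_tendsto' hderiv integrable_mul_stdPhi.integrableOn
    (by simpa using tendsto_stdPhi_atTop.neg)).trans (by ring)

lemma Integrable.mul_stdPhi_comp {f g : ℝ → ℝ} (hf : Integrable f) (hg : Continuous g) :
    Integrable fun x => f x * stdPhi (g x) :=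
  hf.mul_bdd (continuous_stdPhi.comp hg).aestronglyMeasurable
    (Eventually.of_forall fun x => by
      simpa [abs_of_nonneg (stdPhi_nonneg _)] using stdPhi_le_stdPhi_zero (g x))

end StdPhi

section StdCdf

lemma stdCdf_nonneg (x : ℝ) : 0 ≤ stdCdf x :=
  setIntegral_nonneg measurableSet_Iic fun t _ => stdPhi_nonneg t

lemma stdCdf_le_one (x : ℝ) : stdCdf x ≤ 1 :=
  integral_stdPhi ▸ setIntegral_le_integral integrable_stdPhi (Eventually.of_forall stdPhi_nonneg)

lemma stdCdf_sub_stdCdf (a b : ℝ) : stdCdf b - stdCdf a = ∫ t in a..b, stdPhi t :=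
  intervalIntegral.integral_Iic_sub_Iic integrable_stdPhi.integrableOn
    integrable_stdPhi.integrableOn

lemma hasDerivAt_stdCdf (x : ℝ) : HasDerivAt stdCdf (stdPhi x) x := by
  have h : stdCdf = fun u => stdCdf 0 + ∫ t in (0 : ℝ)..u, stdPhi t := by
    ext u
    rw [← stdCdf_sub_stdCdf]
    ring
  rw [h]
  exact (intervalIntegral.integral_hasDerivAt_right integrable_stdPhi.intervalIntegrable
    (continuous_stdPhi.stronglyMeasurableAtFilter _ _) continuous_stdPhi.continuousAt).const_add _

lemma continuous_stdCdf : Continuous stdCdf :=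
  continuous_iff_continuousAt.2 fun x => (hasDerivAt_stdCdf x).continuousAt

lemma stdCdf_neg (x : ℝ) : stdCdf (-x) = ∫ t in Ioi x, stdPhi t := by
  simp only [stdCdf, ← integral_comp_neg_Ioi, stdPhi_neg]

lemma sub_mul_stdPhi_le_stdCdf_sub {a b : ℝ} (hab : a ≤ b) (hba : -b ≤ a) :
    (b - a) * stdPhi b ≤ stdCdf b - stdCdf a := by
  calc (b - a) * stdPhi b = ∫ _ in Ioc a b, stdPhi b := by
        simp [Real.volume_real_Ioc_of_le hab]
    _ ≤ ∫ t in Ioc a b, stdPhi t :=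
        setIntegral_mono_on (integrableOn_const (by simp)) integrable_stdPhi.integrableOn
          measurableSet_Ioc fun y hy => stdPhi_le_stdPhi_of_abs_le
            ((abs_le.2 ⟨by linarith [hy.1], hy.2⟩).trans (le_abs_self b))
    _ = stdCdf b - stdCdf a := by rw [stdCdf_sub_stdCdf, intervalIntegral.integral_of_le hab]

end StdCdf

section NormalLoss

/-- The standard normal loss function `𝔼[(Z - u)⁺]`. -/
noncomputable def normalLoss (u : ℝ) : ℝ := stdPhi u - u * stdCdf (-u)

lemma normalLoss_eq_integral (u : ℝ) :
    normalLoss u = ∫ z in Ioi u, (z - u) * stdPhi z := by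
  simp only [sub_mul]
  rw [integral_sub integrable_mul_stdPhi.integrableOn
    (integrable_stdPhi.integrableOn.const_mul u), integral_const_mul, integral_Ioi_mul_stdPhi,
    ← stdCdf_neg, normalLoss]

lemma normalLoss_nonneg (u : ℝ) : 0 ≤ normalLoss u := by
  rw [normalLoss_eq_integral]
  exact setIntegral_nonneg measurableSet_Ioi fun z hz =>
    mul_nonneg (sub_nonneg.2 (le_of_lt hz)) (stdPhi_nonneg z)

lemma hasDerivAt_normalLoss (u : ℝ) : HasDerivAt normalLoss (-stdCdf (-u)) u := by
  have htail : HasDerivAt (fun u => stdCdf (-u)) (-stdPhi u) u := by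
    simpa [Function.comp_def, stdPhi_neg] using (hasDerivAt_stdCdf (-u)).comp u (hasDerivAt_neg u)
  exact ((hasDerivAt_stdPhi u).sub ((hasDerivAt_id u).mul htail)).congr_deriv (by rw [id_eq]; ring)

lemma antitone_normalLoss : Antitone normalLoss :=
  antitone_of_deriv_nonpos (fun u => (hasDerivAt_normalLoss u).differentiableAt) fun u => by
    simpa [(hasDerivAt_normalLoss u).deriv] using stdCdf_nonneg (-u)

end NormalLoss

section GaussianIntegral

lemma integral_Ioi_comp_add_right (f : ℝ → ℝ) (a d : ℝ) :
    ∫ x in Ioi a, f (x + d) = ∫ x in Ioi (a + d), f x := by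
  have h := (measurePreserving_add_right volume d).setIntegral_preimage_emb
    (measurableEmbedding_addRight d) f (Ioi (a + d))
  rwa [preimage_add_const_Ioi, add_sub_cancel_right] at h

lemma integral_Ioi_stdPhi_div_add {c : ℝ} (hc : 0 < c) (a d : ℝ) :
    ∫ x in Ioi a, stdPhi (x / c + d) = c * stdCdf (-(a / c + d)) := by
  have h := integral_comp_mul_left_Ioi (fun u => stdPhi (u + d)) a (inv_pos.2 hc)
  simp only [inv_inv, smul_eq_mul, integral_Ioi_comp_add_right] at h
  simp only [div_eq_inv_mul, h, stdCdf_neg]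

lemma stdPhi_mul_stdPhi_add_mul_tan {β : ℝ} (hβ : cos β ≠ 0) (ξ x : ℝ) :
    stdPhi x * stdPhi (ξ + x * tan β) = stdPhi (ξ * cos β) * stdPhi (x / cos β + ξ * sin β) := by
  unfold stdPhi
  rw [div_mul_div_comm, div_mul_div_comm, ← Real.exp_add, ← Real.exp_add, tan_eq_sin_div_cos]
  congr 2
  field_simp
  linear_combination (ξ ^ 2 * cos β ^ 2 - x ^ 2) * sin_sq_add_cos_sq β

lemma integral_Ioi_stdPhi_mul_stdPhi_add_mul_tan {β : ℝ} (hβ : 0 < cos β) (ξ : ℝ) :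
    ∫ x in Ioi 0, stdPhi x * stdPhi (ξ + x * tan β)
      = cos β * stdPhi (ξ * cos β) * stdCdf (-(ξ * sin β)) := by
  simp only [stdPhi_mul_stdPhi_add_mul_tan hβ.ne', integral_const_mul,
    integral_Ioi_stdPhi_div_add hβ, zero_div, zero_add]
  ring

lemma integral_Ioi_affine_mul_stdPhi_mul_stdPhi (ξ t a : ℝ) :
    ∫ x in Ioi a, ((1 + t ^ 2) * x + ξ * t) * stdPhi x * stdPhi (ξ + x * t)
      = stdPhi a * stdPhi (ξ + a * t) := by
  have hderiv : ∀ x ∈ Ici a, HasDerivAt (fun x => -(stdPhi x * stdPhi (ξ + x * t)))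
      (((1 + t ^ 2) * x + ξ * t) * stdPhi x * stdPhi (ξ + x * t)) x := fun x _ => by
    have hlin : HasDerivAt (fun x => ξ + x * t) t x := by
      simpa using ((hasDerivAt_id x).mul_const t).const_add ξ
    exact ((hasDerivAt_stdPhi x).mul ((hasDerivAt_stdPhi _).comp x hlin)).neg.congr_deriv
      (by simp only [Function.comp_apply]; ring)
  have hint : Integrable fun x => ((1 + t ^ 2) * x + ξ * t) * stdPhi x * stdPhi (ξ + x * t) :=
    Integrable.mul_stdPhi_comp (((integrable_mul_stdPhi.const_mul (1 + t ^ 2)).add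
      (integrable_stdPhi.const_mul (ξ * t))).congr (Eventually.of_forall fun x => by
        simp only [Pi.add_apply]; ring)) (by fun_prop)
  have htendsto : Tendsto (fun x => stdPhi x * stdPhi (ξ + x * t)) atTop (𝓝 0) :=
    squeeze_zero (fun x => mul_nonneg (stdPhi_nonneg _) (stdPhi_nonneg _))
      (fun x => mul_le_mul_of_nonneg_left (stdPhi_le_stdPhi_zero _) (stdPhi_nonneg x))
      (by simpa using tendsto_stdPhi_atTop.mul_const (stdPhi 0))
  exact (integral_Ioi_of_hasDerivAt_of_tendsto' hderiv hint.integrableOn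
    (by simpa using htendsto.neg)).trans (by ring)

lemma integral_Ioi_mul_stdPhi_mul_stdPhi_add_mul_tan {β : ℝ} (hβ : 0 < cos β) (ξ : ℝ) :
    ∫ x in Ioi 0, x * stdPhi x * stdPhi (ξ + x * tan β)
      = cos β ^ 2 * stdPhi (ξ * cos β) * normalLoss (ξ * sin β) := by
  set t := tan β with ht
  have hsplit : ∫ x in Ioi 0, ((1 + t ^ 2) * x + ξ * t) * stdPhi x * stdPhi (ξ + x * t)
      = (1 + t ^ 2) * (∫ x in Ioi 0, x * stdPhi x * stdPhi (ξ + x * t))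
        + ξ * t * ∫ x in Ioi 0, stdPhi x * stdPhi (ξ + x * t) := by
    rw [← integral_const_mul, ← integral_const_mul, ← integral_add
      ((Integrable.mul_stdPhi_comp integrable_mul_stdPhi (by fun_prop)).integrableOn.const_mul _)
      ((Integrable.mul_stdPhi_comp integrable_stdPhi (by fun_prop)).integrableOn.const_mul _)]
    congr 1
    ext x
    ring
  have hibp := integral_Ioi_affine_mul_stdPhi_mul_stdPhi ξ t 0
  rw [hsplit, integral_Ioi_stdPhi_mul_stdPhi_add_mul_tan hβ,
    stdPhi_mul_stdPhi_add_mul_tan hβ.ne', zero_div, zero_add] at hibp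
  have hsin : sin β = t * cos β := by
    rw [ht, tan_eq_sin_div_cos, div_mul_cancel₀ _ hβ.ne']
  have hcos : cos β ^ 2 * (1 + t ^ 2) = 1 := by
    rw [← inv_one_add_tan_sq hβ.ne', ← ht, inv_mul_cancel₀ (by positivity)]
  unfold normalLoss
  linear_combination cos β ^ 2 * hibp
    - (∫ x in Ioi 0, x * stdPhi x * stdPhi (ξ + x * t)) * hcos
    + cos β ^ 2 * ξ * stdPhi (ξ * cos β) * stdCdf (-(ξ * sin β)) * hsin

end GaussianIntegral

lemma two_mul_mul_stdPhi_mul_stdPhi_le {ξ t x : ℝ} (hξ : 0 ≤ ξ) (ht : 0 ≤ t) (hx : 0 ≤ x) :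
    2 * t * (x * stdPhi x * stdPhi (ξ + x * t))
      ≤ stdPhi x * (stdCdf (ξ + x * t) - stdCdf (ξ - x * t)) := by
  have hinc := sub_mul_stdPhi_le_stdCdf_sub (a := ξ - x * t) (b := ξ + x * t)
    (by nlinarith) (by linarith)
  calc 2 * t * (x * stdPhi x * stdPhi (ξ + x * t))
      = stdPhi x * ((ξ + x * t - (ξ - x * t)) * stdPhi (ξ + x * t)) := by ring
    _ ≤ _ := mul_le_mul_of_nonneg_left hinc (stdPhi_nonneg x)

lemma integrable_stdPhi_mul_stdCdf_sub {f g : ℝ → ℝ} (hf : Continuous f) (hg : Continuous g) :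
    Integrable fun x => stdPhi x * (stdCdf (f x) - stdCdf (g x)) :=
  integrable_stdPhi.mul_bdd (c := 1)
    ((continuous_stdCdf.comp hf).sub (continuous_stdCdf.comp hg)).aestronglyMeasurable
    (Eventually.of_forall fun x => by
      rw [Real.norm_eq_abs, abs_le]
      constructor <;> linarith [stdCdf_nonneg (f x), stdCdf_nonneg (g x),
        stdCdf_le_one (f x), stdCdf_le_one (g x)])

/-- Lower bound on the misclustering integral:
`∫_0^∞ φ(x)(Φ(ξ + x tan β) - Φ(ξ - x tan β)) dx ≥ 2 g(ξ) sin β cos β`. -/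
theorem cluster_loss_integral_lower (ξ β : ℝ) (hξ : 0 ≤ ξ)
    (hβ0 : 0 ≤ β) (hβ : β < Real.pi / 2) :
    2 * gFun ξ * Real.sin β * Real.cos β
      ≤ ∫ x in Set.Ioi (0 : ℝ),
          stdPhi x * (stdCdf (ξ + x * Real.tan β) - stdCdf (ξ - x * Real.tan β)) := by
  have hcos : 0 < cos β := cos_pos_of_mem_Ioo ⟨by linarith [pi_pos], hβ⟩
  have hsin : 0 ≤ sin β := sin_nonneg_of_nonneg_of_le_pi hβ0 (by linarith [pi_pos])
  have htan : 0 ≤ tan β := by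
    rw [tan_eq_sin_div_cos]
    positivity
  have hgFun : gFun ξ ≤ stdPhi (ξ * cos β) * normalLoss (ξ * sin β) :=
    mul_le_mul
      (stdPhi_le_stdPhi_of_abs_le (by
        rw [abs_mul]; exact mul_le_of_le_one_right (abs_nonneg ξ) (abs_cos_le_one β)))
      (antitone_normalLoss (mul_le_of_le_one_right hξ (sin_le_one β)))
      (normalLoss_nonneg ξ) (stdPhi_nonneg _)
  calc 2 * gFun ξ * sin β * cos β
      ≤ 2 * sin β * cos β * (stdPhi (ξ * cos β) * normalLoss (ξ * sin β)) := by
        nlinarith [mul_nonneg hsin hcos.le]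
    _ = ∫ x in Ioi 0, 2 * tan β * (x * stdPhi x * stdPhi (ξ + x * tan β)) := by
        rw [integral_const_mul, integral_Ioi_mul_stdPhi_mul_stdPhi_add_mul_tan hcos,
          tan_eq_sin_div_cos]
        field_simp
    _ ≤ _ := setIntegral_mono_on
        ((Integrable.mul_stdPhi_comp integrable_mul_stdPhi (by fun_prop)).const_mul _).integrableOn
        (integrable_stdPhi_mul_stdCdf_sub (by fun_prop) (by fun_prop)).integrableOn
        measurableSet_Ioi fun x hx => two_mul_mul_stdPhi_mul_stdPhi_le hξ htan (le_of_lt hx)
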